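/- For every Lions forest T, the dual Lions forest T* = (H', D) is a connected graph. Moreover, setting H^{(0)} = {h ∈ H' : h contains a root of T} and, inductively, H^{(i+1)} = {h ∈ H' ∖ (H^{(0)} ∪ ⋯ ∪ H^{(i)}) : there exists h' ∈ H^{(i)} with {h, h'} ∈ D}, the nonempty sets among H^{(0)}, H^{(1)}, … form a partition of H', and for every i the restriction of T* to H^{(i)} is a disjoint union of complete graphs; that is, for h, h', h'' ∈ H^{(i)} with {h, h'} ∈ D, {h', h''} ∈ D and h ≠ h'', one has {h, h''} ∈ D. -/

import Mathlib

/-- A partition of a set `S`: a family of pairwise disjoint nonempty subsets of `S`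
whose union is `S`. -/
def IsPartitionOf {α : Type*} (S : Set α) (P : Set (Set α)) : Prop :=
  (∀ p ∈ P, p.Nonempty) ∧ (∀ p ∈ P, p ⊆ S) ∧ P.Pairwise Disjoint ∧ ⋃₀ P = S

/-- A Lions forest over node type `V` with labels in `{1, …, d}` (encoded as `Fin d`).
The data consists of a finite nonempty node set `N`, a set of directed edges `E` pointing
towards the roots, a distinguished hyperedge `h0 ⊆ N`, a partition `H` of `N \ h0`,
a labelling `L`, together with the depth function (number of edges on the path to the root),
subject to the structural conditions (i), (ii), (iii) of a Lions forest. -/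
structure LionsForest (V : Type*) (d : ℕ) where
  N : Set V
  E : Set (V × V)
  h0 : Set V
  H : Set (Set V)
  L : V → Fin d
  depth : V → ℕ
  finite_N : N.Finite
  nonempty_N : N.Nonempty
  mem_of_edge : ∀ x y : V, (x, y) ∈ E → x ∈ N ∧ y ∈ N
  edge_unique : ∀ x y z : V, (x, y) ∈ E → (x, z) ∈ E → y = z
  h0_subset : h0 ⊆ N
  H_partition : IsPartitionOf (N \ h0) H
  depth_root : ∀ x ∈ N, (∀ y, (x, y) ∉ E) → depth x = 0
  depth_edge : ∀ x y : V, (x, y) ∈ E → depth x = depth y + 1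
  h0_root : h0.Nonempty → ∃ x ∈ h0, ∀ y, (x, y) ∉ E
  hyper_parent : ∀ h ∈ insert h0 H \ {(∅ : Set V)}, ∀ x ∈ h, ∀ y ∈ h,
    depth x < depth y → ∀ z, (y, z) ∈ E → z ∈ h
  hyper_sibling : ∀ h ∈ insert h0 H \ {(∅ : Set V)}, ∀ x₁ ∈ h, ∀ y₁ ∈ h,
    depth x₁ = depth y₁ → ∀ x₂ y₂, (x₁, x₂) ∈ E → (y₁, y₂) ∈ E → x₂ ≠ y₂ →
      x₂ ∈ h ∧ y₂ ∈ h

/-- A root of the forest: a node with no outgoing edge. -/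
def LionsForest.IsRoot {V : Type*} {d : ℕ} (T : LionsForest V d) (x : V) : Prop :=
  x ∈ T.N ∧ ∀ y, (x, y) ∉ T.E

/-- The set of hyperedges `H' = (H ∪ {h0}) \ {∅}` of a Lions forest. -/
def LionsForest.hyperedges {V : Type*} {d : ℕ} (T : LionsForest V d) : Set (Set V) :=
  insert T.h0 T.H \ {∅}

/-- The adjacency relation of the dual Lions forest `T* = (H', D)`: two distinct hyperedges
`h1, h2 ∈ H'` are adjacent iff `h1 ∪ h2` satisfies the structural conditions (ii), (iii) of a
hyperedge. -/
def dualAdj {V : Type*} {d : ℕ} (T : LionsForest V d) (h1 h2 : Set V) : Prop :=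
  h1 ∈ T.hyperedges ∧ h2 ∈ T.hyperedges ∧ h1 ≠ h2 ∧
  (∀ x ∈ h1 ∪ h2, ∀ y ∈ h1 ∪ h2, T.depth x < T.depth y →
    ∀ z, (y, z) ∈ T.E → z ∈ h1 ∪ h2) ∧
  (∀ x₁ ∈ h1 ∪ h2, ∀ y₁ ∈ h1 ∪ h2, T.depth x₁ = T.depth y₁ →
    ∀ x₂ y₂, (x₁, x₂) ∈ T.E → (y₁, y₂) ∈ T.E → x₂ ≠ y₂ →
      x₂ ∈ h1 ∪ h2 ∧ y₂ ∈ h1 ∪ h2)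

/-- Auxiliary recursion computing `(H⁽ⁱ⁾, H⁽⁰⁾ ∪ ⋯ ∪ H⁽ⁱ⁾)`: the layer `H⁽⁰⁾` consists of the
hyperedges containing a root, and `H⁽ⁱ⁺¹⁾` of the hyperedges not in any earlier layer that are
dual-adjacent to a hyperedge of `H⁽ⁱ⁾`. -/
def dualLayerAux {V : Type*} {d : ℕ} (T : LionsForest V d) :
    ℕ → Set (Set V) × Set (Set V)
  | 0 =>
      ({h ∈ T.hyperedges | ∃ x ∈ h, T.IsRoot x},
        {h ∈ T.hyperedges | ∃ x ∈ h, T.IsRoot x})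
  | i + 1 =>
      ({h ∈ T.hyperedges | h ∉ (dualLayerAux T i).2 ∧
          ∃ h' ∈ (dualLayerAux T i).1, dualAdj T h h'},
        (dualLayerAux T i).2 ∪
          {h ∈ T.hyperedges | h ∉ (dualLayerAux T i).2 ∧
            ∃ h' ∈ (dualLayerAux T i).1, dualAdj T h h'})

/-- The layer `H⁽ⁱ⁾` of hyperedges of a Lions forest. -/
def dualLayer {V : Type*} {d : ℕ} (T : LionsForest V d) (i : ℕ) : Set (Set V) :=
  (dualLayerAux T i).1

/-! By (iii), the shallowest nodes of a hyperedge `h` without a root all hang from a single node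
(two distinct parents would be even shallower nodes of `h`); the hyperedge of that node is the
parent of `h`. The union of `h` with its parent, or with another hyperedge hanging from the same
node, again satisfies (ii) and (iii), as does the union of two hyperedges containing roots, and
every dual adjacency is of one of these kinds. So following parents connects every hyperedge to
the pairwise adjacent root hyperedges, the layer `H⁽ⁱ⁾` consists of the hyperedges `i` parent
steps away from a root, and inside a layer adjacency means hanging from the same node (or
containing roots), an equivalence relation. -/

lemma isPartitionOf_fibers {α β : Type*} (S : Set α) (f : α → β) :
    IsPartitionOf S {L | L.Nonempty ∧ ∃ b, L = {x ∈ S | f x = b}} := by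
  refine ⟨fun L hL => hL.1, ?_, ?_, ?_⟩
  · rintro L ⟨-, b, rfl⟩
    exact Set.sep_subset _ _
  · rintro L₁ ⟨-, b₁, rfl⟩ L₂ ⟨-, b₂, rfl⟩ hne
    refine Set.disjoint_left.2 fun x hx₁ hx₂ => hne ?_
    rw [← hx₁.2, ← hx₂.2]
  · ext x
    constructor
    · rintro ⟨L, ⟨-, b, rfl⟩, hx⟩
      exact hx.1
    · intro hx
      exact ⟨{y ∈ S | f y = f x}, ⟨⟨x, hx, rfl⟩, f x, rfl⟩, hx, rfl⟩

namespace LionsForest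

variable {V : Type*} {d : ℕ} (T : LionsForest V d) {h h₁ h₂ : Set V} {x y : V}

noncomputable def minDepth (h : Set V) : ℕ := sInf (T.depth '' h)

lemma nonempty_of_mem_hyperedges (hh : h ∈ T.hyperedges) : h.Nonempty :=
  Set.nonempty_iff_ne_empty.2 hh.2

lemma subset_N_of_mem_hyperedges (hh : h ∈ T.hyperedges) : h ⊆ T.N := by
  rcases Set.mem_insert_iff.1 hh.1 with rfl | hH
  · exact T.h0_subset
  · exact fun x hx => (T.H_partition.2.1 h hH hx).1

lemma exists_mem_hyperedges (hx : x ∈ T.N) : ∃ h ∈ T.hyperedges, x ∈ h := by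
  by_cases hx₀ : x ∈ T.h0
  · exact ⟨T.h0, ⟨Set.mem_insert _ _, Set.nonempty_iff_ne_empty.1 ⟨x, hx₀⟩⟩, hx₀⟩
  · obtain ⟨h, hH, hxh⟩ : x ∈ ⋃₀ T.H := T.H_partition.2.2.2 ▸ ⟨hx, hx₀⟩
    exact ⟨h, ⟨Set.mem_insert_of_mem _ hH, Set.nonempty_iff_ne_empty.1 ⟨x, hxh⟩⟩, hxh⟩

lemma eq_of_mem_hyperedges (hh₁ : h₁ ∈ T.hyperedges) (hh₂ : h₂ ∈ T.hyperedges)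
    (hx₁ : x ∈ h₁) (hx₂ : x ∈ h₂) : h₁ = h₂ := by
  rcases Set.mem_insert_iff.1 hh₁.1 with rfl | hH₁ <;>
    rcases Set.mem_insert_iff.1 hh₂.1 with rfl | hH₂
  · rfl
  · exact absurd hx₁ (T.H_partition.2.1 h₂ hH₂ hx₂).2
  · exact absurd hx₂ (T.H_partition.2.1 h₁ hH₁ hx₁).2
  · by_contra hne
    exact (T.H_partition.2.2.1 hH₁ hH₂ hne).le_bot ⟨hx₁, hx₂⟩

lemma exists_edge_of_depth_pos (hx : x ∈ T.N) (hd : 0 < T.depth x) : ∃ y, (x, y) ∈ T.E := by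
  by_contra! hroot
  exact hd.ne' (T.depth_root x hx hroot)

lemma minDepth_le (hx : x ∈ h) : T.minDepth h ≤ T.depth x :=
  Nat.sInf_le ⟨x, hx, rfl⟩

lemma exists_depth_eq_minDepth (hne : h.Nonempty) : ∃ x ∈ h, T.depth x = T.minDepth h :=
  Nat.sInf_mem (hne.image T.depth)

lemma minDepth_eq_zero_iff (hh : h ∈ T.hyperedges) :
    T.minDepth h = 0 ↔ ∃ x ∈ h, T.IsRoot x := by
  constructor
  · intro hm
    obtain ⟨x, hx, hdx⟩ := T.exists_depth_eq_minDepth (T.nonempty_of_mem_hyperedges hh)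
    refine ⟨x, hx, T.subset_N_of_mem_hyperedges hh hx, fun y hxy => ?_⟩
    have := T.depth_edge x y hxy
    omega
  · rintro ⟨x, hx, hxN, hroot⟩
    have := T.minDepth_le hx
    rw [T.depth_root x hxN hroot] at this
    omega

lemma mem_of_edge_of_minDepth_lt (hh : h ∈ T.hyperedges) (hy : y ∈ h)
    (hd : T.minDepth h < T.depth y) (hyz : (y, x) ∈ T.E) : x ∈ h := by
  obtain ⟨w, hw, hdw⟩ := T.exists_depth_eq_minDepth (T.nonempty_of_mem_hyperedges hh)
  exact T.hyper_parent h hh w hw y hy (hdw ▸ hd) x hyz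

lemma parent_eq_of_depth_eq_minDepth (hh : h ∈ T.hyperedges) {x' y' : V} (hx : x ∈ h)
    (hy : y ∈ h) (hdx : T.depth x = T.minDepth h) (hdy : T.depth y = T.minDepth h)
    (hxx' : (x, x') ∈ T.E) (hyy' : (y, y') ∈ T.E) : x' = y' := by
  by_contra hne
  have hx' := (T.hyper_sibling h hh x hx y hy (hdx.trans hdy.symm) x' y' hxx' hyy' hne).1
  have := T.minDepth_le hx'
  have := T.depth_edge x x' hxx'
  omega

open Classical in
/-- The common parent of the shallowest nodes of `h` (junk if `h` contains a root). -/
noncomputable def parentNode (h : Set V) : V :=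
  if hp : ∃ p, ∃ x ∈ h, T.depth x = T.minDepth h ∧ (x, p) ∈ T.E then hp.choose
  else T.nonempty_N.some

lemma exists_edge_parentNode (hh : h ∈ T.hyperedges) (hm : 0 < T.minDepth h) :
    ∃ x ∈ h, T.depth x = T.minDepth h ∧ (x, T.parentNode h) ∈ T.E := by
  obtain ⟨x, hx, hdx⟩ := T.exists_depth_eq_minDepth (T.nonempty_of_mem_hyperedges hh)
  obtain ⟨p, hp⟩ := T.exists_edge_of_depth_pos (T.subset_N_of_mem_hyperedges hh hx) (hdx ▸ hm)
  have hex : ∃ p, ∃ x ∈ h, T.depth x = T.minDepth h ∧ (x, p) ∈ T.E := ⟨p, x, hx, hdx, hp⟩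
  rw [parentNode, dif_pos hex]
  exact hex.choose_spec

lemma eq_parentNode (hh : h ∈ T.hyperedges) (hx : x ∈ h) (hdx : T.depth x = T.minDepth h)
    (hxy : (x, y) ∈ T.E) : y = T.parentNode h := by
  have hm : 0 < T.minDepth h := by
    have := T.depth_edge x y hxy
    omega
  obtain ⟨x', hx', hdx', hx'p⟩ := T.exists_edge_parentNode hh hm
  exact T.parent_eq_of_depth_eq_minDepth hh hx hx' hdx hdx' hxy hx'p

lemma depth_parentNode (hh : h ∈ T.hyperedges) (hm : 0 < T.minDepth h) :
    T.depth (T.parentNode h) + 1 = T.minDepth h := by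
  obtain ⟨x, -, hdx, hxp⟩ := T.exists_edge_parentNode hh hm
  have := T.depth_edge x _ hxp
  omega

noncomputable def parentHyperedge (h : Set V) : Set V :=
  Classical.epsilon fun h' => h' ∈ T.hyperedges ∧ T.parentNode h ∈ h'

lemma parentHyperedge_spec (hh : h ∈ T.hyperedges) (hm : 0 < T.minDepth h) :
    T.parentHyperedge h ∈ T.hyperedges ∧ T.parentNode h ∈ T.parentHyperedge h := by
  obtain ⟨x, -, -, hxp⟩ := T.exists_edge_parentNode hh hm
  obtain ⟨h', hh', hp⟩ := T.exists_mem_hyperedges (T.mem_of_edge x _ hxp).2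
  exact Classical.epsilon_spec (p := fun h' => h' ∈ T.hyperedges ∧ T.parentNode h ∈ h')
    ⟨h', hh', hp⟩

lemma minDepth_parentHyperedge_lt (hh : h ∈ T.hyperedges) (hm : 0 < T.minDepth h) :
    T.minDepth (T.parentHyperedge h) < T.minDepth h := by
  have := T.minDepth_le (T.parentHyperedge_spec hh hm).2
  have := T.depth_parentNode hh hm
  omega

lemma dualAdj_symm (hadj : dualAdj T h₁ h₂) : dualAdj T h₂ h₁ := by
  obtain ⟨hh₁, hh₂, hne, hpar, hsib⟩ := hadj
  rw [Set.union_comm] at hpar hsib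
  exact ⟨hh₂, hh₁, hne.symm, hpar, hsib⟩

lemma dualAdj_of_parent_closed (hh₁ : h₁ ∈ T.hyperedges) (hh₂ : h₂ ∈ T.hyperedges)
    (hne : h₁ ≠ h₂) (m : ℕ) (c : V) (hlow : ∀ w ∈ h₁ ∪ h₂, m ≤ T.depth w)
    (hup : ∀ w ∈ h₁ ∪ h₂, m < T.depth w → ∀ z, (w, z) ∈ T.E → z ∈ h₁ ∪ h₂)
    (hbot : ∀ w ∈ h₁ ∪ h₂, T.depth w = m → ∀ z, (w, z) ∈ T.E → z = c) :
    dualAdj T h₁ h₂ := by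
  refine ⟨hh₁, hh₂, hne, fun x hx y hy hxy => hup y hy ((hlow x hx).trans_lt hxy), ?_⟩
  intro x₁ hx₁ y₁ hy₁ hd x₂ y₂ hxx hyy hne₂
  rcases (hlow x₁ hx₁).lt_or_eq with hlt | heq
  · exact ⟨hup x₁ hx₁ hlt x₂ hxx, hup y₁ hy₁ (hd ▸ hlt) y₂ hyy⟩
  · exact absurd ((hbot x₁ hx₁ heq.symm x₂ hxx).trans
      (hbot y₁ hy₁ (hd ▸ heq.symm) y₂ hyy).symm) hne₂

lemma dualAdj_parentHyperedge (hh : h ∈ T.hyperedges) (hm : 0 < T.minDepth h) :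
    dualAdj T h (T.parentHyperedge h) := by
  obtain ⟨hp, hpp⟩ := T.parentHyperedge_spec hh hm
  have hlt := T.minDepth_parentHyperedge_lt hh hm
  refine T.dualAdj_of_parent_closed hh hp (fun e => hlt.ne (congrArg T.minDepth e).symm)
    (T.minDepth (T.parentHyperedge h)) (T.parentNode (T.parentHyperedge h)) ?_ ?_ ?_
  · rintro w (hw | hw)
    · exact hlt.le.trans (T.minDepth_le hw)
    · exact T.minDepth_le hw
  · rintro w (hw | hw) hdw z hwz
    · rcases (T.minDepth_le hw).lt_or_eq with hlt' | heq
      · exact Or.inl (T.mem_of_edge_of_minDepth_lt hh hw hlt' hwz)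
      · exact Or.inr (T.eq_parentNode hh hw heq.symm hwz ▸ hpp)
    · exact Or.inr (T.mem_of_edge_of_minDepth_lt hp hw hdw hwz)
  · rintro w (hw | hw) hdw z hwz
    · have := T.minDepth_le hw
      omega
    · exact T.eq_parentNode hp hw hdw hwz

/-- Both hyperedges contain a root, or both hang from the same node. -/
def Siblings (h₁ h₂ : Set V) : Prop :=
  T.minDepth h₁ = T.minDepth h₂ ∧ (T.minDepth h₁ = 0 ∨ T.parentNode h₁ = T.parentNode h₂)

variable {T} in
lemma Siblings.trans {h₃ : Set V} (h₁₂ : T.Siblings h₁ h₂) (h₂₃ : T.Siblings h₂ h₃) :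
    T.Siblings h₁ h₃ := by
  refine ⟨h₁₂.1.trans h₂₃.1, ?_⟩
  rcases h₁₂.2 with h0 | hp
  · exact Or.inl h0
  · rcases h₂₃.2 with h0 | hp'
    · exact Or.inl (h₁₂.1.trans h0)
    · exact Or.inr (hp.trans hp')

lemma dualAdj_of_siblings (hh₁ : h₁ ∈ T.hyperedges) (hh₂ : h₂ ∈ T.hyperedges)
    (hne : h₁ ≠ h₂) (hs : T.Siblings h₁ h₂) : dualAdj T h₁ h₂ := by
  obtain ⟨hmd, hroot⟩ := hs
  refine T.dualAdj_of_parent_closed hh₁ hh₂ hne (T.minDepth h₁) (T.parentNode h₁) ?_ ?_ ?_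
  · rintro w (hw | hw)
    · exact T.minDepth_le hw
    · exact hmd ▸ T.minDepth_le hw
  · rintro w (hw | hw) hdw z hwz
    · exact Or.inl (T.mem_of_edge_of_minDepth_lt hh₁ hw hdw hwz)
    · exact Or.inr (T.mem_of_edge_of_minDepth_lt hh₂ hw (hmd ▸ hdw) hwz)
  · rintro w (hw | hw) hdw z hwz
    · exact T.eq_parentNode hh₁ hw hdw hwz
    · rw [T.eq_parentNode hh₂ hw (hdw.trans hmd) hwz]
      refine (hroot.resolve_left fun h0 => ?_).symm
      have := T.depth_edge w z hwz
      omega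

lemma siblings_of_dualAdj (hadj : dualAdj T h₁ h₂) (hmd : T.minDepth h₁ = T.minDepth h₂) :
    T.Siblings h₁ h₂ := by
  refine ⟨hmd, or_iff_not_imp_left.2 fun h0 => ?_⟩
  have hm : 0 < T.minDepth h₁ := Nat.pos_of_ne_zero h0
  obtain ⟨hh₁, hh₂, -, -, hsib⟩ := hadj
  obtain ⟨x, hx, hdx, hxp⟩ := T.exists_edge_parentNode hh₁ hm
  obtain ⟨y, hy, hdy, hyp⟩ := T.exists_edge_parentNode hh₂ (hmd ▸ hm)
  have hdp := T.depth_parentNode hh₁ hm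
  by_contra hne
  rcases (hsib x (Or.inl hx) y (Or.inr hy) (by omega) _ _ hxp hyp hne).1 with hp | hp
  · have := T.minDepth_le hp
    omega
  · have := T.minDepth_le hp
    omega

lemma eq_parentHyperedge_of_dualAdj (hadj : dualAdj T h₁ h₂)
    (hlt : T.minDepth h₁ < T.minDepth h₂) : h₁ = T.parentHyperedge h₂ := by
  obtain ⟨hh₁, hh₂, -, hpar, -⟩ := hadj
  have hm : 0 < T.minDepth h₂ := by omega
  obtain ⟨x, hx, hdx⟩ := T.exists_depth_eq_minDepth (T.nonempty_of_mem_hyperedges hh₁)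
  obtain ⟨y, hy, hdy, hyp⟩ := T.exists_edge_parentNode hh₂ hm
  have hdp := T.depth_parentNode hh₂ hm
  have hp₁ : T.parentNode h₂ ∈ h₁ := by
    rcases hpar x (Or.inl hx) y (Or.inr hy) (by omega) _ hyp with hp | hp
    · exact hp
    · have := T.minDepth_le hp
      omega
  obtain ⟨hph, hpp⟩ := T.parentHyperedge_spec hh₂ hm
  exact T.eq_of_mem_hyperedges hh₁ hph hp₁ hpp

/-- The number of parent steps from `h` to a hyperedge containing a root; the guard, which makes
the recursion well founded, holds exactly when `h` contains no root. -/
noncomputable def rank (h : Set V) : ℕ :=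
  if T.minDepth (T.parentHyperedge h) < T.minDepth h then rank (T.parentHyperedge h) + 1
  else 0
termination_by T.minDepth h

lemma rank_eq_zero_of_minDepth_eq_zero (hm : T.minDepth h = 0) : T.rank h = 0 := by
  rw [rank, if_neg (by omega)]

lemma rank_eq_succ (hh : h ∈ T.hyperedges) (hm : 0 < T.minDepth h) :
    T.rank h = T.rank (T.parentHyperedge h) + 1 := by
  rw [rank, if_pos (T.minDepth_parentHyperedge_lt hh hm)]

lemma rank_eq_zero_iff (hh : h ∈ T.hyperedges) : T.rank h = 0 ↔ T.minDepth h = 0 := by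
  refine ⟨fun hr => ?_, T.rank_eq_zero_of_minDepth_eq_zero⟩
  by_contra hm
  rw [T.rank_eq_succ hh (Nat.pos_of_ne_zero hm)] at hr
  omega

lemma rank_eq_of_siblings (hh₁ : h₁ ∈ T.hyperedges) (hh₂ : h₂ ∈ T.hyperedges)
    (hs : T.Siblings h₁ h₂) : T.rank h₁ = T.rank h₂ := by
  obtain ⟨hmd, hroot⟩ := hs
  rcases Nat.eq_zero_or_pos (T.minDepth h₁) with h0 | hm
  · rw [T.rank_eq_zero_of_minDepth_eq_zero h0, T.rank_eq_zero_of_minDepth_eq_zero (hmd ▸ h0)]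
  · rw [T.rank_eq_succ hh₁ hm, T.rank_eq_succ hh₂ (hmd ▸ hm), parentHyperedge, parentHyperedge,
      hroot.resolve_left hm.ne']

lemma rank_eq_succ_of_dualAdj (hadj : dualAdj T h₁ h₂) (hlt : T.minDepth h₁ < T.minDepth h₂) :
    T.rank h₂ = T.rank h₁ + 1 := by
  rw [T.rank_eq_succ hadj.2.1 (by omega), ← T.eq_parentHyperedge_of_dualAdj hadj hlt]

lemma rank_le_succ_of_dualAdj (hadj : dualAdj T h₁ h₂) : T.rank h₁ ≤ T.rank h₂ + 1 := by
  rcases lt_trichotomy (T.minDepth h₁) (T.minDepth h₂) with hlt | heq | hgt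
  · have := T.rank_eq_succ_of_dualAdj hadj hlt
    omega
  · exact (T.rank_eq_of_siblings hadj.1 hadj.2.1 (T.siblings_of_dualAdj hadj heq)).le.trans
      (Nat.le_succ _)
  · exact (T.rank_eq_succ_of_dualAdj (T.dualAdj_symm hadj) hgt).le

lemma siblings_of_dualAdj_of_rank_eq (hadj : dualAdj T h₁ h₂) (hr : T.rank h₁ = T.rank h₂) :
    T.Siblings h₁ h₂ := by
  rcases lt_trichotomy (T.minDepth h₁) (T.minDepth h₂) with hlt | heq | hgt
  · have := T.rank_eq_succ_of_dualAdj hadj hlt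
    omega
  · exact T.siblings_of_dualAdj hadj heq
  · have := T.rank_eq_succ_of_dualAdj (T.dualAdj_symm hadj) hgt
    omega

lemma dualAdj_of_rank_eq {h₃ : Set V} (h₁₂ : dualAdj T h₁ h₂) (h₂₃ : dualAdj T h₂ h₃)
    (hr₁₂ : T.rank h₁ = T.rank h₂) (hr₂₃ : T.rank h₂ = T.rank h₃) (hne : h₁ ≠ h₃) :
    dualAdj T h₁ h₃ :=
  T.dualAdj_of_siblings h₁₂.1 h₂₃.2.1 hne
    ((T.siblings_of_dualAdj_of_rank_eq h₁₂ hr₁₂).trans (T.siblings_of_dualAdj_of_rank_eq h₂₃ hr₂₃))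

lemma rank_eq_succ_iff (hh : h ∈ T.hyperedges) (i : ℕ) :
    T.rank h = i + 1 ↔
      ¬T.rank h ≤ i ∧ ∃ h' ∈ T.hyperedges, T.rank h' = i ∧ dualAdj T h h' := by
  constructor
  · intro hr
    have hm : 0 < T.minDepth h := Nat.pos_of_ne_zero fun h0 => by
      rw [T.rank_eq_zero_of_minDepth_eq_zero h0] at hr
      omega
    have := T.rank_eq_succ hh hm
    exact ⟨by omega, T.parentHyperedge h, (T.parentHyperedge_spec hh hm).1, by omega,
      T.dualAdj_parentHyperedge hh hm⟩
  · rintro ⟨hgt, h', -, rfl, hadj⟩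
    have := T.rank_le_succ_of_dualAdj hadj
    omega

lemma dualLayerAux_eq (i : ℕ) :
    dualLayerAux T i = ({h ∈ T.hyperedges | T.rank h = i}, {h ∈ T.hyperedges | T.rank h ≤ i}) := by
  induction i with
  | zero =>
    have hroot : {h ∈ T.hyperedges | ∃ x ∈ h, T.IsRoot x} = {h ∈ T.hyperedges | T.rank h = 0} :=
      Set.sep_ext_iff.2 fun h hh => by rw [T.rank_eq_zero_iff hh, T.minDepth_eq_zero_iff hh]
    simp only [dualLayerAux, Nat.le_zero, hroot]
  | succ i ih =>
    have hlayer : {h ∈ T.hyperedges | h ∉ (dualLayerAux T i).2 ∧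
        ∃ h' ∈ (dualLayerAux T i).1, dualAdj T h h'} = {h ∈ T.hyperedges | T.rank h = i + 1} := by
      refine Set.sep_ext_iff.2 fun h hh => ?_
      simp only [ih, Set.mem_sep_iff, hh, true_and, and_assoc, T.rank_eq_succ_iff hh]
    rw [dualLayerAux, hlayer, ih]
    ext h
    · rfl
    · simp only [Set.mem_union, Set.mem_sep_iff, ← and_or_left, Nat.le_succ_iff]

lemma dualLayer_eq (i : ℕ) : dualLayer T i = {h ∈ T.hyperedges | T.rank h = i} :=
  congrArg Prod.fst (T.dualLayerAux_eq i)

lemma exists_reflTransGen_minDepth_eq_zero (hh : h ∈ T.hyperedges) :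
    ∃ r ∈ T.hyperedges, T.minDepth r = 0 ∧ Relation.ReflTransGen (dualAdj T) h r := by
  induction hn : T.minDepth h using Nat.strong_induction_on generalizing h with
  | _ n ih =>
    rcases Nat.eq_zero_or_pos n with rfl | hpos
    · exact ⟨h, hh, hn, .refl⟩
    · have hm : 0 < T.minDepth h := hn ▸ hpos
      obtain ⟨r, hr, hr0, hpath⟩ := ih _ (hn ▸ T.minDepth_parentHyperedge_lt hh hm)
        (T.parentHyperedge_spec hh hm).1 rfl
      exact ⟨r, hr, hr0, .head (T.dualAdj_parentHyperedge hh hm) hpath⟩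

lemma reflTransGen_dualAdj (hh₁ : h₁ ∈ T.hyperedges) (hh₂ : h₂ ∈ T.hyperedges) :
    Relation.ReflTransGen (dualAdj T) h₁ h₂ := by
  have : Std.Symm (dualAdj T) := ⟨fun _ _ => T.dualAdj_symm⟩
  obtain ⟨r₁, hr₁, hr₁0, hp₁⟩ := T.exists_reflTransGen_minDepth_eq_zero hh₁
  obtain ⟨r₂, hr₂, hr₂0, hp₂⟩ := T.exists_reflTransGen_minDepth_eq_zero hh₂
  have hr : Relation.ReflTransGen (dualAdj T) r₁ r₂ := by
    rcases eq_or_ne r₁ r₂ with rfl | hne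
    · exact .refl
    · exact .single (T.dualAdj_of_siblings hr₁ hr₂ hne ⟨hr₁0.trans hr₂0.symm, .inl hr₁0⟩)
  exact hp₁.trans (hr.trans (Std.Symm.symm _ _ hp₂))

end LionsForest

/-- The dual Lions forest of a Lions forest is connected; the nonempty layers
`H⁽⁰⁾, H⁽¹⁾, …` form a partition of the set `H'` of hyperedges; and on each layer the dual
adjacency restricts to a disjoint union of complete graphs. -/
theorem stmt_5 {V : Type*} {d : ℕ} (T : LionsForest V d) :
    (∀ h ∈ T.hyperedges, ∀ h' ∈ T.hyperedges,
      Relation.ReflTransGen (dualAdj T) h h') ∧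
    IsPartitionOf T.hyperedges
      {L : Set (Set V) | L.Nonempty ∧ ∃ i : ℕ, L = dualLayer T i} ∧
    (∀ i : ℕ, ∀ h ∈ dualLayer T i, ∀ h' ∈ dualLayer T i, ∀ h'' ∈ dualLayer T i,
      dualAdj T h h' → dualAdj T h' h'' → h ≠ h'' → dualAdj T h h'') := by
  simp only [T.dualLayer_eq]
  refine ⟨fun h hh h' hh' => T.reflTransGen_dualAdj hh hh', isPartitionOf_fibers _ _, ?_⟩
  rintro i h ⟨-, hr⟩ h' ⟨-, hr'⟩ h'' ⟨-, hr''⟩ hadj hadj' hne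
  exact T.dualAdj_of_rank_eq hadj hadj' (hr.trans hr'.symm) (hr'.trans hr''.symm) hne
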